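/- Soundness of PETS(Ax) via approximation semantics: let 𝒟 ⊢ t = u be a PETS(Ax) derivation in Variable Normal Form, ρ an assignment, F a model of Ax (i.e., for all axioms s=s′ in Ax and all assignments ρ′, ⟦s⟧_{F,ρ′} ⊑ ⟦s′⟧_{F,ρ′}), and κ = max(G(F),G(ρ)) + lh(𝒟). Then there exist sequences σ₁ and σ₂ of updates based on F, κ and 𝒟 such that ⟦t⟧_{F,ρ} ⊑ ⟦u⟧_{F*σ₁,ρ} and ⟦u⟧_{F,ρ} ⊑ ⟦t⟧_{F*σ₂,ρ}. -/

import Mathlib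

namespace PETS

/-! ## Approximate values -/

/-- The set `𝔻` of approximate values: binary strings plus `*` (unknown). -/
inductive D where
  | eps  : D
  | b0   : D → D
  | b1   : D → D
  | star : D
deriving DecidableEq

instance : Zero D := ⟨D.star⟩

/-- The approximation relation `⊑` on `𝔻`. -/
inductive Approx : D → D → Prop where
  | star (v : D) : Approx .star v
  | eps : Approx .eps .eps
  | b0 {v w : D} : Approx v w → Approx (.b0 v) (.b0 w)
  | b1 {v w : D} : Approx v w → Approx (.b1 v) (.b1 w)

/-- Componentwise extension of `⊑` to tuples. -/
def TApprox {n : ℕ} (u v : Fin n → D) : Prop := ∀ i, Approx (u i) (v i)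

/-- Compatibility `u △ v`. -/
def Compat (u v : D) : Prop := Approx u v ∨ Approx v u

/-- Componentwise compatibility of tuples. -/
def TCompat {n : ℕ} (u v : Fin n → D) : Prop := ∀ i, Compat (u i) (v i)

/-- The gauge `G(v)` of an approximate value. -/
def D.gauge : D → ℕ
  | .eps => 1
  | .star => 1
  | .b0 v => v.gauge + 1
  | .b1 v => v.gauge + 1

/-- The gauge of a tuple of approximate values. -/
def tupGauge {n : ℕ} (v : Fin n → D) : ℕ := Finset.univ.sup fun i => (v i).gauge

open Classical in
/-- `maxapprx S`: the `⊑`-greatest element of `S` if it exists, else `*`.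
In particular `maxapprx ∅ = *`. -/
noncomputable def maxapprx (S : Set D) : D :=
  if h : ∃ m, m ∈ S ∧ ∀ v ∈ S, Approx v m then h.choose else D.star

/-! ## Generators and consistent sets -/

/-- A finite set of (potential) generators for `𝔻^n → 𝔻`. -/
abbrev Gens (n : ℕ) := Finset ((Fin n → D) × D)

/-- `f` is a consistent set of generators for `𝔻^n → 𝔻`:
all values are `≠ *` and compatible arguments have compatible values. -/
def ConsistentGens {n : ℕ} (f : Gens n) : Prop :=
  (∀ p ∈ f, p.2 ≠ D.star) ∧
  ∀ p ∈ f, ∀ q ∈ f, TCompat p.1 q.1 → Compat p.2 q.2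

/-- `f[x] = { v | ∃ w ⊑ x, (w ↦ v) ∈ f }`. -/
def gensAt {n : ℕ} (f : Gens n) (x : Fin n → D) : Set D :=
  {v | ∃ w : Fin n → D, TApprox w x ∧ (w, v) ∈ f}

/-- The finitely generated map `f(x) = maxapprx f[x]`. -/
noncomputable def applyGens {n : ℕ} (f : Gens n) (x : Fin n → D) : D :=
  maxapprx (gensAt f x)

/-! ## Terms -/

/-- Terms over the language: variables, the basic symbols `ε`, `s₀`, `s₁`, and
countably many non-basic function symbols `op k` of each arity `a`
(a non-basic symbol is identified by the pair `(k, a)`). -/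
inductive Tm where
  | var : ℕ → Tm
  | eps : Tm
  | s0 : Tm → Tm
  | s1 : Tm → Tm
  | app : (k : ℕ) → (a : ℕ) → (Fin a → Tm) → Tm

/-- The length (number of symbols) of a term. -/
def Tm.lh : Tm → ℕ
  | .var _ => 1
  | .eps => 1
  | .s0 t => t.lh + 1
  | .s1 t => t.lh + 1
  | .app _ a args => (Finset.univ.sum fun i : Fin a => (args i).lh) + 1

/-- The set of variables occurring in a term. -/
def Tm.vars : Tm → Finset ℕ
  | .var x => {x}
  | .eps => ∅
  | .s0 t => t.vars
  | .s1 t => t.vars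
  | .app _ a args => Finset.univ.biUnion fun i : Fin a => (args i).vars

/-- Substitution `t[u/x]` of the term `u` for the variable `x` in `t`. -/
def Tm.subst (t : Tm) (x : ℕ) (u : Tm) : Tm :=
  match t with
  | .var y => if y = x then u else .var y
  | .eps => .eps
  | .s0 s => .s0 (s.subst x u)
  | .s1 s => .s1 (s.subst x u)
  | .app k a args => .app k a fun i => (args i).subst x u

/-- Simultaneous substitution of terms for all variables. -/
def Tm.msubst (σ : ℕ → Tm) : Tm → Tm
  | .var x => σ x
  | .eps => .eps
  | .s0 t => .s0 (t.msubst σ)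
  | .s1 t => .s1 (t.msubst σ)
  | .app k a args => .app k a fun i => (args i).msubst σ

/-! ## Frames and assignments -/

/-- An entry of a frame: a non-basic symbol `(k, a)` together with a
generator `(arg, out)` for `𝔻^a → 𝔻`. -/
abbrev Entry := Σ _k : ℕ, Σ a : ℕ, (Fin a → D) × D

/-- A frame: a finite set of entries, i.e. a finite partial map from
non-basic function symbols to finite sets of generators. -/
abbrev Frame := Finset Entry

/-- `F(f)[x]` for the symbol `f = (k, a)`:
the set `{ v | ∃ w ⊑ x, (w ↦ v) ∈ F(f) }`. -/
def Frame.setAt (F : Frame) (k a : ℕ) (x : Fin a → D) : Set D :=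
  {v | ∃ w : Fin a → D, TApprox w x ∧ (⟨k, a, (w, v)⟩ : Entry) ∈ F}

/-- The evaluation `F(f)(x)` of the finitely generated map of the non-basic
symbol `f = (k, a)` in the frame `F`. -/
noncomputable def Frame.app (F : Frame) (k a : ℕ) (x : Fin a → D) : D :=
  maxapprx (F.setAt k a x)

/-- The gauge of a frame entry. -/
def Entry.gauge (e : Entry) : ℕ := max (tupGauge e.2.2.1) e.2.2.2.gauge

/-- The gauge `G(F)` of a frame. -/
def Frame.gauge (F : Frame) : ℕ := F.sup Entry.gauge

/-- A frame is consistent if each of its sections is a consistent set of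
generators (values `≠ *`, compatible arguments have compatible values). -/
def Frame.Consistent (F : Frame) : Prop :=
  (∀ (k a : ℕ) (w : Fin a → D) (v : D), (⟨k, a, (w, v)⟩ : Entry) ∈ F → v ≠ D.star) ∧
  (∀ (k a : ℕ) (w w' : Fin a → D) (v v' : D),
    (⟨k, a, (w, v)⟩ : Entry) ∈ F → (⟨k, a, (w', v')⟩ : Entry) ∈ F →
    TCompat w w' → Compat v v')

/-- An assignment: a finitely supported map from variables to `𝔻`
(where the zero of `𝔻` is `*`, i.e. `ρ(x) = *` outside the domain). -/
abbrev Assignment := ℕ →₀ D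

/-- The gauge `G(ρ)` of an assignment. -/
noncomputable def Assignment.gauge (ρ : Assignment) : ℕ :=
  ρ.support.sup fun x => (ρ x).gauge

/-- The evaluation `⟦t⟧_{F,ρ}` of a term under a frame and an assignment:
basic symbols are evaluated as themselves, non-basic symbols via their
finitely generated maps. -/
noncomputable def eval (F : Frame) (ρ : Assignment) : Tm → D
  | .var x => ρ x
  | .eps => D.eps
  | .s0 t => D.b0 (eval F ρ t)
  | .s1 t => D.b1 (eval F ρ t)
  | .app k a args => F.app k a fun i => eval F ρ (args i)

/-! ## Nice axiom systems -/

/-- A generalized variable: a variable, `ε`, `s₀(x)` or `s₁(x)`. -/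
inductive GVar where
  | var : ℕ → GVar
  | eps : GVar
  | s0 : ℕ → GVar
  | s1 : ℕ → GVar
deriving DecidableEq

/-- The term denoted by a generalized variable. -/
def GVar.toTm : GVar → Tm
  | .var x => .var x
  | .eps => .eps
  | .s0 x => .s0 (.var x)
  | .s1 x => .s1 (.var x)

/-- The variables of a generalized variable. -/
def GVar.vars : GVar → Finset ℕ
  | .var x => {x}
  | .eps => ∅
  | .s0 x => {x}
  | .s1 x => {x}

/-- Applying an assignment to a generalized variable,
e.g. `ρ(sᵢ(x)) = sᵢ(ρ(x))`. -/
def GVar.evalA (ρ : Assignment) : GVar → D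
  | .var x => ρ x
  | .eps => D.eps
  | .s0 x => D.b0 (ρ x)
  | .s1 x => D.b1 (ρ x)

/-- Unifiability of two generalized variables (they have a common
substitution instance). -/
def GVar.unif : GVar → GVar → Prop
  | .var _, _ => True
  | _, .var _ => True
  | .eps, .eps => True
  | .s0 _, .s0 _ => True
  | .s1 _, .s1 _ => True
  | _, _ => False

/-- An axiom: an equation `f(t₁,…,tₐ) = rhs` where `f` is the non-basic
symbol `(k, a)` and each `tᵢ` is a generalized variable. -/
structure Axm where
  k : ℕ
  a : ℕ
  args : Fin a → GVar
  rhs : Tm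

/-- The left-hand side term `f(t₁,…,tₐ)` of an axiom. -/
def Axm.lhs (A : Axm) : Tm := .app A.k A.a fun i => (A.args i).toTm

/-- The variables of the left-hand side of an axiom. -/
def Axm.lhsVars (A : Axm) : Finset ℕ := Finset.univ.biUnion fun i => (A.args i).vars

/-- All variables of an axiom. -/
def Axm.vars (A : Axm) : Finset ℕ := A.lhsVars ∪ A.rhs.vars

/-- A nice set of axioms: each axiom has the form `f(x⃗) = t`, `f(ε,x⃗) = t`,
`f(x0,x⃗) = t` or `f(x1,x⃗) = t` (so all arguments beyond the first are plain
variables), the variables on the left are pairwise distinct, the right-hand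
side variables occur on the left, and no left-hand side occurs twice among
the axioms, also modulo substitution. -/
structure NiceAxioms (Ax : Set Axm) : Prop where
  shape : ∀ A ∈ Ax, ∀ i : Fin A.a, 0 < (i : ℕ) → ∃ x, A.args i = GVar.var x
  distinct : ∀ A ∈ Ax, ∀ i j : Fin A.a, i ≠ j → Disjoint ((A.args i).vars) ((A.args j).vars)
  rhsVars : ∀ A ∈ Ax, A.rhs.vars ⊆ A.lhsVars
  unique : ∀ A ∈ Ax, ∀ B ∈ Ax, A.k = B.k → ∀ h : A.a = B.a,
    (∀ i : Fin A.a, GVar.unif (A.args i) (B.args (Fin.cast h i))) → A = B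

/-! ## Derivations in PETS(Ax) -/

/-- Derivations of the pure equational theory with substitution `PETS(Ax)`:
`Deriv Ax t u` is the type of derivations ending in the equation `t = u`. -/
inductive Deriv (Ax : Set Axm) : Tm → Tm → Type where
  | ax (A : Axm) (hA : A ∈ Ax) (σ : ℕ → Tm) :
      Deriv Ax (A.lhs.msubst σ) (A.rhs.msubst σ)
  | refl (t : Tm) : Deriv Ax t t
  | symm {t u : Tm} (d : Deriv Ax u t) : Deriv Ax t u
  | trans {t s u : Tm} (d₁ : Deriv Ax t s) (d₂ : Deriv Ax s u) : Deriv Ax t u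
  | compat {t u : Tm} (s : Tm) (x : ℕ) (d : Deriv Ax t u) :
      Deriv Ax (s.subst x t) (s.subst x u)
  | subst {t u : Tm} (s : Tm) (x : ℕ) (d : Deriv Ax t u) :
      Deriv Ax (t.subst x s) (u.subst x s)

namespace Deriv

variable {Ax : Set Axm}

/-- The length `lh(𝒟)` of a derivation: the sum of the lengths of the
equations occurring in it plus the length of the additional syntax
identifying rule applications. -/
def lh : {a b : Tm} → Deriv Ax a b → ℕ
  | _, _, .ax A _ σ => (A.lhs.msubst σ).lh + (A.rhs.msubst σ).lh + 1
  | _, _, .refl t => t.lh + t.lh + 1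
  | a, b, .symm d => d.lh + (a.lh + b.lh + 1)
  | a, b, .trans d₁ d₂ => d₁.lh + d₂.lh + (a.lh + b.lh + 1)
  | _, _, @Deriv.compat _ t u s x d =>
      d.lh + ((s.subst x t).lh + (s.subst x u).lh + 1) + (s.lh + 1 + 1)
  | _, _, @Deriv.subst _ t u s x d =>
      d.lh + ((t.subst x s).lh + (u.subst x s).lh + 1)
        + (t.lh + s.lh + 1 + u.lh + s.lh + 1 + 2)

/-- The set of variables occurring in a derivation. -/
def varsOf : {a b : Tm} → Deriv Ax a b → Finset ℕ
  | _, _, .ax A _ σ => (A.lhs.msubst σ).vars ∪ (A.rhs.msubst σ).vars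
  | _, _, .refl t => t.vars
  | _, _, .symm d => d.varsOf
  | _, _, .trans d₁ d₂ => d₁.varsOf ∪ d₂.varsOf
  | _, _, @Deriv.compat _ _ _ s x d => d.varsOf ∪ s.vars ∪ {x}
  | _, _, @Deriv.subst _ _ _ s x d => d.varsOf ∪ s.vars ∪ {x}

/-- The list (with multiplicities) of variables of a derivation bound by
applications of the Substitution rule. -/
def bvars : {a b : Tm} → Deriv Ax a b → List ℕ
  | _, _, .ax _ _ _ => []
  | _, _, .refl _ => []
  | _, _, .symm d => d.bvars
  | _, _, .trans d₁ d₂ => d₁.bvars ++ d₂.bvars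
  | _, _, .compat _ _ d => d.bvars
  | _, _, @Deriv.subst _ _ _ _ x d => x :: d.bvars

/-- The set of axioms of `Ax` occurring (i.e. used by an Axiom rule) in a
derivation. -/
def axiomsUsed : {a b : Tm} → Deriv Ax a b → Set Axm
  | _, _, .ax A _ _ => {A}
  | _, _, .refl _ => ∅
  | _, _, .symm d => d.axiomsUsed
  | _, _, .trans d₁ d₂ => d₁.axiomsUsed ∪ d₂.axiomsUsed
  | _, _, .compat _ _ d => d.axiomsUsed
  | _, _, .subst _ _ d => d.axiomsUsed

/-- A substitution is an injective renaming of the variables of an axiom. -/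
def InjRenaming (A : Axm) (σ : ℕ → Tm) : Prop :=
  (∀ x ∈ A.vars, ∃ y, σ x = Tm.var y) ∧ Set.InjOn σ ↑A.vars

/-- Condition (1) of Variable Normal Form: every application of the Axiom
rule is an injective renaming of an axiom. -/
def VNFax : {a b : Tm} → Deriv Ax a b → Prop
  | _, _, .ax A _ σ => InjRenaming A σ
  | _, _, .refl _ => True
  | _, _, .symm d => d.VNFax
  | _, _, .trans d₁ d₂ => d₁.VNFax ∧ d₂.VNFax
  | _, _, .compat _ _ d => d.VNFax
  | _, _, .subst _ _ d => d.VNFax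

/-- Variable Normal Form: every Axiom rule application is an injective
renaming of an axiom in `Ax`, and every variable occurring in the derivation
either occurs in the final equation or is bound by exactly one application
of the Substitution rule. -/
def VNF {a b : Tm} (d : Deriv Ax a b) : Prop :=
  d.VNFax ∧ ∀ x ∈ d.varsOf, x ∈ a.vars ∪ b.vars ∨ d.bvars.count x = 1

end Deriv

/-! ## Models, updates, update sequences -/

/-- `F` is a model of `Ax`: for every axiom `t = u` in `Ax` and every
assignment `ρ`, `⟦t⟧_{F,ρ} ⊑ ⟦u⟧_{F,ρ}`. -/
def IsModel (F : Frame) (Ax : Set Axm) : Prop :=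
  ∀ A ∈ Ax, ∀ ρ : Assignment, Approx (eval F ρ A.lhs) (eval F ρ A.rhs)

/-- `F` is a `κ`-model of the derivation `d`: `F` is a frame (its sections
are consistent sets) with `G(F) ≤ κ`, and for every axiom `t = u` of `Ax`
occurring in `d` and every assignment `ρ` with `dom(ρ) ⊆ var(d)` and
`G(ρ) ≤ κ`, we have `⟦t⟧_{F,ρ} ⊑ ⟦u⟧_{F,ρ}`. -/
def IsKModel {Ax : Set Axm} {a b : Tm} (F : Frame) (κ : ℕ) (d : Deriv Ax a b) : Prop :=
  F.Consistent ∧ F.gauge ≤ κ ∧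
  ∀ A ∈ d.axiomsUsed, ∀ ρ : Assignment,
    ↑ρ.support ⊆ (↑d.varsOf : Set ℕ) → ρ.gauge ≤ κ →
    Approx (eval F ρ A.lhs) (eval F ρ A.rhs)

/-- An update `f : v⃗ ↦ w` for the non-basic symbol `f = (k, a)`. -/
structure Upd where
  k : ℕ
  a : ℕ
  v : Fin a → D
  w : D

/-- The gauge `G(v⃗, w)` of an update. -/
def Upd.gauge (u : Upd) : ℕ := max (tupGauge u.v) u.w.gauge

/-- The frame entry corresponding to an update. -/
def Upd.entry (u : Upd) : Entry := ⟨u.k, u.a, (u.v, u.w)⟩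

/-- `F * (f : v⃗ ↦ w)`: the frame `F` updated by the update. -/
noncomputable def Frame.apUpd (F : Frame) (u : Upd) : Frame := insert u.entry F

/-- `F * σ` for a sequence of updates `σ`. -/
noncomputable def Frame.apSeq (F : Frame) (σ : List Upd) : Frame :=
  σ.foldl Frame.apUpd F

/-- `u` is an update based on `F`, `κ` and `d`: a generator `v⃗ ↦ w` with
`G(v⃗, w) ≤ κ` for a non-basic symbol `f`, obtained from an axiom
`f(t⃗) = u'` of `Ax` occurring in `d` and an assignment `ρ` by
`vᵢ = ρ(tᵢ)` and `w = ⟦u'⟧_{F,ρ}`. -/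
def IsUpdate {Ax : Set Axm} {a b : Tm} (F : Frame) (κ : ℕ) (d : Deriv Ax a b)
    (u : Upd) : Prop :=
  u.w ≠ D.star ∧ u.gauge ≤ κ ∧
  ∃ A ∈ d.axiomsUsed, ∃ ρ : Assignment,
    u = ⟨A.k, A.a, fun i => (A.args i).evalA ρ, eval F ρ A.rhs⟩

/-- `σ` is a sequence of updates based on `F`, `κ` and `d`: each update in
the sequence is an update based on the frame produced so far. -/
def IsUpdSeq {Ax : Set Axm} {a b : Tm} (κ : ℕ) (d : Deriv Ax a b) :
    Frame → List Upd → Prop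
  | _, [] => True
  | F, u :: σ => IsUpdate F κ d u ∧ IsUpdSeq κ d (F.apUpd u) σ

/-- The gauge `G(σ)` of a sequence of updates. -/
def seqGauge (σ : List Upd) : ℕ := (σ.map Upd.gauge).foldr max 0

/-- The extent `E(σ)` of a sequence of updates (maximal arity used). -/
def seqExt (σ : List Upd) : ℕ := (σ.map Upd.a).foldr max 0

/-! ## Instructions -/

/-- Instructions: `A[t→u]`, `A[t←u]` for axiom (instances) `t = u`, and
`S↑[t,s/x]`, `S↓[t,s/x]` for terms `t, s` and a variable `x`. -/
inductive Instr where
  | axF : Tm → Tm → Instr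
  | axB : Tm → Tm → Instr
  | sUp : Tm → Tm → ℕ → Instr
  | sDown : Tm → Tm → ℕ → Instr

/-- The length of an instruction. -/
def Instr.lh : Instr → ℕ
  | .axF t u => t.lh + u.lh + 1
  | .axB t u => t.lh + u.lh + 1
  | .sUp t s _ => t.lh + s.lh + 1
  | .sDown t s _ => t.lh + s.lh + 1

/-- The length of a sequence of instructions. -/
def instrsLh (τ : List Instr) : ℕ := (τ.map Instr.lh).sum

/-- An instruction is *for* the derivation `d` if its axiom instructions
carry (injective renamings of) axioms occurring in `d`. -/
def Instr.For {Ax : Set Axm} {a b : Tm} (d : Deriv Ax a b) : Instr → Prop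
  | .axF t u => ∃ A ∈ d.axiomsUsed, ∃ σ : ℕ → Tm,
      Deriv.InjRenaming A σ ∧ t = A.lhs.msubst σ ∧ u = A.rhs.msubst σ
  | .axB t u => ∃ A ∈ d.axiomsUsed, ∃ σ : ℕ → Tm,
      Deriv.InjRenaming A σ ∧ t = A.lhs.msubst σ ∧ u = A.rhs.msubst σ
  | .sUp _ _ _ => True
  | .sDown _ _ _ => True

/-- The instruction sequences `→Inst_𝒟` (first component) and `←Inst_𝒟`
(second component) extracted from a derivation. -/
def Deriv.insts {Ax : Set Axm} : {a b : Tm} → Deriv Ax a b → List Instr × List Instr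
  | _, _, .ax A _ σ =>
      ([.axF (A.lhs.msubst σ) (A.rhs.msubst σ)],
       [.axB (A.lhs.msubst σ) (A.rhs.msubst σ)])
  | _, _, .refl _ => ([], [])
  | _, _, .symm d => (d.insts.2, d.insts.1)
  | _, _, .trans d₁ d₂ => (d₁.insts.1 ++ d₂.insts.1, d₂.insts.2 ++ d₁.insts.2)
  | _, _, .compat _ _ d => d.insts
  | _, _, @Deriv.subst _ t u s x d =>
      (Instr.sUp t s x :: (d.insts.1 ++ [Instr.sDown u s x]),
       Instr.sUp u s x :: (d.insts.2 ++ [Instr.sDown t s x]))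

/-- `Ψ(t ← u, ⟨F, ρ⟩)`: for `t` of the form `f(t⃗)`, the update `f : v⃗ ↦ w`
with `vᵢ = ρ(tᵢ)` and `w = ⟦u⟧_{F,ρ}`. -/
noncomputable def Psi (t u : Tm) (F : Frame) (ρ : Assignment) : Upd :=
  match t with
  | .app k a args => ⟨k, a, fun i => eval F ρ (args i), eval F ρ u⟩
  | _ => ⟨0, 0, Fin.elim0, eval F ρ u⟩

/-- One step of the state transformer `Φ` (the frame `F` is the fixed base
frame; the state consists of the update sequence so far and the current
assignment). -/
noncomputable def PhiStep (F : Frame) (st : List Upd × Assignment) :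
    Instr → List Upd × Assignment
  | .axF _ _ => st
  | .axB t u => (st.1 ++ [Psi t u (F.apSeq st.1) st.2], st.2)
  | .sUp _ s x => (st.1, Finsupp.update st.2 x (eval (F.apSeq st.1) st.2 s))
  | .sDown _ _ x => (st.1, st.2.erase x)

/-- The state transformer `Φ(τ, ⟨F, σ, ρ⟩) = ⟨F, σ', ρ'⟩`, processing the
instruction sequence `τ` from left to right. -/
noncomputable def Phi (F : Frame) (τ : List Instr) (st : List Upd × Assignment) :
    List Upd × Assignment :=
  τ.foldl (PhiStep F) st

/-! ## Sub-derivations -/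

/-- `SubDeriv e d`: `e` is a sub-derivation of `d`. -/
inductive SubDeriv {Ax : Set Axm} :
    {a b c d : Tm} → Deriv Ax a b → Deriv Ax c d → Prop where
  | refl {a b : Tm} (d : Deriv Ax a b) : SubDeriv d d
  | symm {a b t u : Tm} {e : Deriv Ax a b} {d : Deriv Ax u t} :
      SubDeriv e d → SubDeriv e (Deriv.symm d)
  | transL {a b t s u : Tm} {e : Deriv Ax a b} {d₁ : Deriv Ax t s} {d₂ : Deriv Ax s u} :
      SubDeriv e d₁ → SubDeriv e (Deriv.trans d₁ d₂)
  | transR {a b t s u : Tm} {e : Deriv Ax a b} {d₁ : Deriv Ax t s} {d₂ : Deriv Ax s u} :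
      SubDeriv e d₂ → SubDeriv e (Deriv.trans d₁ d₂)
  | compat {a b t u : Tm} (s : Tm) (x : ℕ) {e : Deriv Ax a b} {d : Deriv Ax t u} :
      SubDeriv e d → SubDeriv e (Deriv.compat s x d)
  | subst {a b t u : Tm} (s : Tm) (x : ℕ) {e : Deriv Ax a b} {d : Deriv Ax t u} :
      SubDeriv e d → SubDeriv e (Deriv.subst s x d)


/-!
The derivation is read as a program that refines the frame. Both directions are proved together
by induction on the derivation. An axiom instance `f(t⃗) = u` read backwards is realised by adding
the generator `ρ(t⃗) ↦ ⟦u⟧_{F,ρ}` to the frame. Because the left-hand sides of nice axioms are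
linear, every generator of `F` compatible with the new one can be lifted to an instance of the
same axiom, so the new frame stays consistent; because no two left-hand sides unify, the new
generator only fires for that axiom, so it stays a model of `Ax`. This lets the induction continue
from the updated frame: transitivity concatenates update sequences, while compatibility and
substitution follow from monotonicity of evaluation in the frame and the assignment. Each update
is bounded by `max(G(F), G(ρ))` plus the length of its sub-derivation, and these budgets add up
to `lh(𝒟)`.
-/

theorem Approx.refl : ∀ v : D, Approx v v
  | .eps => .eps
  | .star => .star _
  | .b0 v => .b0 (Approx.refl v)
  | .b1 v => .b1 (Approx.refl v)

theorem Approx.trans {a b c : D} (hab : Approx a b) (hbc : Approx b c) : Approx a c := by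
  induction hab generalizing c with
  | star => exact .star c
  | eps => exact hbc
  | b0 _ ih => cases hbc with | b0 h => exact .b0 (ih h)
  | b1 _ ih => cases hbc with | b1 h => exact .b1 (ih h)

instance : Preorder D where
  le := Approx
  le_refl := Approx.refl
  le_trans _ _ _ := Approx.trans

theorem Compat.symm {a b : D} (h : Compat a b) : Compat b a := h.elim .inr .inl

theorem Compat.exists_upperBound {a b : D} (h : Compat a b) :
    ∃ c, Approx a c ∧ Approx b c :=
  h.elim (fun h => ⟨b, h, .refl b⟩) (fun h => ⟨a, .refl a, h⟩)

theorem compat_of_approx_of_approx {v w x : D} (hv : Approx v x) (hw : Approx w x) :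
    Compat v w := by
  induction hv generalizing w with
  | star => exact .inl (.star _)
  | eps => cases hw <;> first | exact .inr (.star _) | exact .inl .eps
  | b0 _ ih =>
    cases hw with
    | star => exact .inr (.star _)
    | b0 h => exact (ih h).elim (fun h => .inl (.b0 h)) (fun h => .inr (.b0 h))
  | b1 _ ih =>
    cases hw with
    | star => exact .inr (.star _)
    | b1 h => exact (ih h).elim (fun h => .inl (.b1 h)) (fun h => .inr (.b1 h))

theorem exists_greatest_of_compat {S : Set D} (hfin : S.Finite) (hne : S.Nonempty)
    (hS : ∀ a ∈ S, ∀ b ∈ S, Compat a b) : ∃ m ∈ S, ∀ v ∈ S, Approx v m := by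
  obtain ⟨m, hm⟩ := hfin.exists_maximal hne
  exact ⟨m, hm.prop, fun v hv => (hS v hv m hm.prop).elim id (hm.le_of_ge hv)⟩

theorem approx_maxapprx {S : Set D} (hfin : S.Finite) (hS : ∀ a ∈ S, ∀ b ∈ S, Compat a b)
    {v : D} (hv : v ∈ S) : Approx v (maxapprx S) := by
  have hex := exists_greatest_of_compat hfin ⟨v, hv⟩ hS
  rw [maxapprx, dif_pos hex]
  exact hex.choose_spec.2 v hv

theorem maxapprx_approx {S : Set D} {y : D} (h : ∀ v ∈ S, Approx v y) :
    Approx (maxapprx S) y := by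
  rw [maxapprx]
  split
  · next hex => exact h _ hex.choose_spec.1
  · exact .star y

namespace Frame

theorem setAt_finite (F : Frame) (k a : ℕ) (x : Fin a → D) : (F.setAt k a x).Finite :=
  (F.finite_toSet.image fun e => e.2.2.2).subset fun _ ⟨_, _, he⟩ => ⟨_, he, rfl⟩

theorem approx_app {F : Frame} (hF : F.Consistent) {k a : ℕ} {x : Fin a → D} {v : D}
    (hv : v ∈ F.setAt k a x) : Approx v (F.app k a x) :=
  approx_maxapprx (F.setAt_finite k a x)
    (fun _ ⟨w₁, hw₁, h₁⟩ _ ⟨w₂, hw₂, h₂⟩ =>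
      hF.2 k a w₁ w₂ _ _ h₁ h₂ fun i => compat_of_approx_of_approx (hw₁ i) (hw₂ i))
    hv

theorem app_approx {F : Frame} {k a : ℕ} {x : Fin a → D} {y : D}
    (h : ∀ v ∈ F.setAt k a x, Approx v y) : Approx (F.app k a x) y :=
  maxapprx_approx h

theorem app_mono {F F' : Frame} (hF' : F'.Consistent) (hFF' : F ⊆ F') {k a : ℕ}
    {x x' : Fin a → D} (hx : TApprox x x') : Approx (F.app k a x) (F'.app k a x') :=
  app_approx fun _ ⟨w, hw, he⟩ => approx_app hF' ⟨w, fun i => (hw i).trans (hx i), hFF' he⟩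

end Frame

theorem eval_mono {F F' : Frame} (hF' : F'.Consistent) (hFF' : F ⊆ F') {ρ ρ' : Assignment} :
    ∀ t : Tm, (∀ x ∈ t.vars, Approx (ρ x) (ρ' x)) → Approx (eval F ρ t) (eval F' ρ' t)
  | .var x, h => h x (Finset.mem_singleton_self x)
  | .eps, _ => .eps
  | .s0 t, h => .b0 (eval_mono hF' hFF' t h)
  | .s1 t, h => .b1 (eval_mono hF' hFF' t h)
  | .app _ _ args, h => Frame.app_mono hF' hFF' fun i =>
      eval_mono hF' hFF' (args i) fun x hx =>
        h x (Finset.mem_biUnion.mpr ⟨i, Finset.mem_univ i, hx⟩)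

theorem eval_msubst {F : Frame} {ρ ρ' : Assignment} {σ : ℕ → Tm} :
    ∀ t : Tm, (∀ x ∈ t.vars, eval F ρ (σ x) = ρ' x) → eval F ρ (t.msubst σ) = eval F ρ' t
  | .var x, h => h x (Finset.mem_singleton_self x)
  | .eps, _ => rfl
  | .s0 t, h => congrArg D.b0 (eval_msubst t h)
  | .s1 t, h => congrArg D.b1 (eval_msubst t h)
  | .app k a args, h => congrArg (F.app k a) <| funext fun i =>
      eval_msubst (args i) fun x hx => h x (Finset.mem_biUnion.mpr ⟨i, Finset.mem_univ i, hx⟩)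

theorem eval_subst {F : Frame} {ρ : Assignment} {x : ℕ} {s : Tm} :
    ∀ t : Tm, eval F ρ (t.subst x s) = eval F (ρ.update x (eval F ρ s)) t
  | .var y => by
    by_cases h : y = x
    · subst h; simp [Tm.subst, eval]
    · simp [Tm.subst, eval, h]
  | .eps => rfl
  | .s0 t => congrArg D.b0 (eval_subst t)
  | .s1 t => congrArg D.b1 (eval_subst t)
  | .app k a args => congrArg (F.app k a) <| funext fun i => eval_subst (args i)

theorem eval_toTm (F : Frame) (ρ : Assignment) (g : GVar) : eval F ρ g.toTm = g.evalA ρ := by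
  cases g <;> rfl

theorem eval_lhs (F : Frame) (ρ : Assignment) (A : Axm) :
    eval F ρ A.lhs = F.app A.k A.a fun i => (A.args i).evalA ρ := by
  simp only [Axm.lhs, eval, eval_toTm]

theorem Assignment.approx_update (ρ : Assignment) (x : ℕ) {v v' : D} (h : Approx v v') (y : ℕ) :
    Approx (ρ.update x v y) (ρ.update x v' y) := by
  by_cases hy : y = x
  · subst hy; simpa using h
  · simpa [Function.update_of_ne hy] using Approx.refl (ρ y)

theorem exists_assignment_eval_eq (F : Frame) (ρ : Assignment) (σ : ℕ → Tm) (s : Finset ℕ) :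
    ∃ ρ' : Assignment, ∀ x ∈ s, eval F ρ (σ x) = ρ' x := by
  classical
  exact ⟨Finsupp.indicator s fun x _ => eval F ρ (σ x), fun x hx => by
    simp [Finsupp.indicator_apply, hx]⟩

theorem eval_msubst_arg {F : Frame} {ρ ρ' : Assignment} {σ : ℕ → Tm} {A : Axm}
    (h : ∀ x ∈ A.lhs.vars, eval F ρ (σ x) = ρ' x) (i : Fin A.a) :
    eval F ρ ((A.args i).toTm.msubst σ) = (A.args i).evalA ρ' := by
  rw [eval_msubst _ fun x hx => h x (Finset.mem_biUnion.mpr ⟨i, Finset.mem_univ i, hx⟩),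
    eval_toTm]

theorem Assignment.gauge_apply_le (ρ : Assignment) (x : ℕ) : (ρ x).gauge ≤ max ρ.gauge 1 := by
  by_cases h : x ∈ ρ.support
  · exact (Finset.le_sup (f := fun x => (ρ x).gauge) h).trans (le_max_left _ _)
  · rw [Finsupp.notMem_support_iff.mp h]; exact le_max_right _ _

theorem Assignment.gauge_update_le (ρ : Assignment) (x : ℕ) (v : D) :
    Assignment.gauge (ρ.update x v) ≤ max (max ρ.gauge 1) v.gauge := by
  refine Finset.sup_le fun y _ => ?_
  by_cases h : y = x
  · subst h; simp
  · simp only [Finsupp.coe_update, Function.update_of_ne h]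
    exact (gauge_apply_le ρ y).trans (le_max_left _ _)

theorem Frame.gauge_value_le {F : Frame} {k a : ℕ} {w : Fin a → D} {v : D}
    (h : (⟨k, a, (w, v)⟩ : Entry) ∈ F) : v.gauge ≤ F.gauge :=
  (le_max_right _ _).trans (Finset.le_sup (f := Entry.gauge) h)

theorem Frame.gauge_app_le (F : Frame) (k a : ℕ) (x : Fin a → D) :
    (F.app k a x).gauge ≤ max F.gauge 1 := by
  rw [Frame.app, maxapprx]
  split
  · next hex =>
    obtain ⟨_, _, he⟩ := hex.choose_spec.1
    exact (gauge_value_le he).trans (le_max_left _ _)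
  · exact le_max_right _ _

theorem eval_gauge_le (F : Frame) (ρ : Assignment) :
    ∀ t : Tm, (eval F ρ t).gauge ≤ max F.gauge ρ.gauge + t.lh
  | .var x => by have := ρ.gauge_apply_le x; simp only [eval, Tm.lh]; omega
  | .eps => by simp [eval, D.gauge, Tm.lh]
  | .s0 t => by have := eval_gauge_le F ρ t; simp only [eval, D.gauge, Tm.lh]; omega
  | .s1 t => by have := eval_gauge_le F ρ t; simp only [eval, D.gauge, Tm.lh]; omega
  | .app k a args => by
    have := F.gauge_app_le k a fun i => eval F ρ (args i)
    simp only [eval, Tm.lh]; omega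

theorem Tm.lh_lt_of_arg {k a : ℕ} (args : Fin a → Tm) (i : Fin a) :
    (args i).lh < (Tm.app k a args).lh :=
  Nat.lt_succ_of_le <|
    Finset.single_le_sum (fun j _ => Nat.zero_le ((args j).lh)) (Finset.mem_univ i)

theorem Tm.one_le_lh (t : Tm) : 1 ≤ t.lh := by
  cases t <;> simp [Tm.lh]

namespace GVar

def unapply : GVar → D → D
  | .var _, c => c
  | .s0 _, .b0 c => c
  | .s1 _, .b1 c => c
  | _, _ => D.star

theorem approx_unapply {g : GVar} {ρ : Assignment} {c : D} (h : Approx (g.evalA ρ) c)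
    {x : ℕ} (hx : x ∈ g.vars) : Approx (ρ x) (g.unapply c) := by
  cases g <;> simp only [vars, Finset.mem_singleton, Finset.notMem_empty] at hx <;> subst_vars
  · exact h
  · cases h with | b0 h => exact h
  · cases h with | b1 h => exact h

theorem evalA_of_unapply {g : GVar} {ρ ρ' : Assignment} {c : D} (h : Approx (g.evalA ρ) c)
    (hρ' : ∀ x ∈ g.vars, ρ' x = g.unapply c) : g.evalA ρ' = c := by
  cases g with
  | var x => exact hρ' x (Finset.mem_singleton_self x)
  | eps => cases h; rfl
  | s0 x => cases h with | b0 _ => exact congrArg D.b0 (hρ' x (Finset.mem_singleton_self x))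
  | s1 x => cases h with | b1 _ => exact congrArg D.b1 (hρ' x (Finset.mem_singleton_self x))

theorem unapply_evalA {g : GVar} (ρ : Assignment) {x : ℕ} (hx : x ∈ g.vars) :
    g.unapply (g.evalA ρ) = ρ x := by
  cases g <;> simp_all [vars, unapply, evalA]

theorem unif_of_approx {g g' : GVar} {ρ ρ' : Assignment}
    (h : Approx (g.evalA ρ) (g'.evalA ρ')) : g.unif g' := by
  cases g <;> cases g' <;> trivial

end GVar

/-- Linear patterns match every refinement of their values. -/
theorem exists_assignment_evalA_eq {n : ℕ} {args : Fin n → GVar}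
    (hlin : ∀ i j, i ≠ j → Disjoint (args i).vars (args j).vars) {ρ : Assignment}
    {c : Fin n → D} (hc : ∀ i, Approx ((args i).evalA ρ) (c i)) :
    ∃ ρ' : Assignment, (∀ x, Approx (ρ x) (ρ' x)) ∧ ∀ i, (args i).evalA ρ' = c i := by
  classical
  let f : ℕ → D := fun x =>
    if h : ∃ i, x ∈ (args i).vars then (args h.choose).unapply (c h.choose) else ρ x
  have hf : ∀ i, ∀ x ∈ (args i).vars, f x = (args i).unapply (c i) := by
    intro i x hx
    have hex : ∃ i, x ∈ (args i).vars := ⟨i, hx⟩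
    have hi : hex.choose = i := by
      by_contra hne
      exact Finset.disjoint_left.mp (hlin _ _ hne) hex.choose_spec hx
    simp only [f, dif_pos hex, hi]
  let ρ' : Assignment :=
    Finsupp.onFinset (ρ.support ∪ Finset.univ.biUnion fun i => (args i).vars) f fun x hx => by
      by_cases h : ∃ i, x ∈ (args i).vars
      · obtain ⟨i, hi⟩ := h
        exact Finset.mem_union_right _ (Finset.mem_biUnion.mpr ⟨i, Finset.mem_univ i, hi⟩)
      · simp only [f, dif_neg h] at hx
        exact Finset.mem_union_left _ (Finsupp.mem_support_iff.mpr hx)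
  refine ⟨ρ', fun x => ?_, fun i => GVar.evalA_of_unapply (hc i) (hf i)⟩
  show Approx (ρ x) (f x)
  by_cases h : ∃ i, x ∈ (args i).vars
  · obtain ⟨i, hi⟩ := h
    rw [hf i x hi]
    exact GVar.approx_unapply (hc i) hi
  · simp only [f, dif_neg h]
    exact .refl _

/-- The update `f : ρ(t⃗) ↦ ⟦u⟧_{F,ρ}` obtained from the axiom `f(t⃗) = u`. -/
noncomputable def Axm.upd (A : Axm) (F : Frame) (ρ : Assignment) : Upd :=
  ⟨A.k, A.a, fun i => (A.args i).evalA ρ, eval F ρ A.rhs⟩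

theorem Axm.gauge_upd_le {F : Frame} {ρ ρ' : Assignment} {σ : ℕ → Tm} {A : Axm}
    (h : ∀ x ∈ A.lhs.vars ∪ A.rhs.vars, eval F ρ (σ x) = ρ' x) :
    (A.upd F ρ').gauge ≤ max F.gauge ρ.gauge + ((A.lhs.msubst σ).lh + (A.rhs.msubst σ).lh) := by
  refine max_le (Finset.sup_le fun (i : Fin A.a) _ => ?_) ?_
  · have hv := eval_gauge_le F ρ ((A.args i).toTm.msubst σ)
    have hlh : ((A.args i).toTm.msubst σ).lh < (A.lhs.msubst σ).lh :=
      Tm.lh_lt_of_arg (k := A.k) (fun j => (A.args j).toTm.msubst σ) i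
    rw [eval_msubst_arg fun x hx => h x (Finset.mem_union_left _ hx)] at hv
    change ((A.args i).evalA ρ').gauge ≤ _
    omega
  · have hw := eval_gauge_le F ρ (A.rhs.msubst σ)
    rw [eval_msubst A.rhs fun x hx => h x (Finset.mem_union_right _ hx)] at hw
    change (eval F ρ' A.rhs).gauge ≤ _
    omega

theorem Frame.Consistent.apUpd {F : Frame} (hF : F.Consistent) {u : Upd} (hu : u.w ≠ D.star)
    (hcompat : ∀ w v, (⟨u.k, u.a, (w, v)⟩ : Entry) ∈ F → TCompat w u.v → Compat v u.w) :
    (F.apUpd u).Consistent := by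
  obtain ⟨k, a, w, v⟩ := u
  constructor
  · intro k a w v h
    rcases Finset.mem_insert.mp h with h | h
    · cases h; exact hu
    · exact hF.1 k a w v h
  · intro k a w w' v v' h h' hww'
    rcases Finset.mem_insert.mp h with h | h <;> rcases Finset.mem_insert.mp h' with h' | h'
    · cases h; cases h'; exact .inl (.refl _)
    · cases h; exact (hcompat w' v' h' fun i => (hww' i).symm).symm
    · cases h'; exact hcompat w v h hww'
    · exact hF.2 k a w w' v v' h h' hww'

section NiceAxioms

variable {Ax : Set Axm} (hAx : NiceAxioms Ax) {A : Axm} (hA : A ∈ Ax) {F : Frame}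
  (hF : F.Consistent) (hM : IsModel F Ax)
include hAx hA hF hM

/-- Refine `ρ` so that the instance of the left-hand side lies above both `w` and `ρ(t⃗)`: then `v`
and `⟦u⟧_{F,ρ}` both lie below `⟦u⟧` at the refined assignment. -/
theorem compat_eval_rhs (ρ : Assignment) {w : Fin A.a → D} {v : D}
    (he : (⟨A.k, A.a, (w, v)⟩ : Entry) ∈ F) (hw : TCompat w fun i => (A.args i).evalA ρ) :
    Compat v (eval F ρ A.rhs) := by
  choose c hwc hρc using fun i => (hw i).exists_upperBound
  obtain ⟨ρ', hρρ', hρ'c⟩ := exists_assignment_evalA_eq (hAx.distinct A hA) hρc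
  have hv : Approx v (eval F ρ' A.lhs) := by
    rw [eval_lhs]
    exact Frame.approx_app hF ⟨w, fun i => by simpa only [hρ'c] using hwc i, he⟩
  exact compat_of_approx_of_approx (hv.trans (hM A hA ρ'))
    (eval_mono hF subset_rfl A.rhs fun x _ => hρρ' x)

theorem consistent_apUpd_upd (ρ : Assignment) (hw : eval F ρ A.rhs ≠ D.star) :
    (F.apUpd (A.upd F ρ)).Consistent :=
  hF.apUpd hw fun _ _ he hw => compat_eval_rhs hAx hA hF hM ρ he hw

theorem isModel_apUpd_upd (ρ : Assignment) (hw : eval F ρ A.rhs ≠ D.star) :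
    IsModel (F.apUpd (A.upd F ρ)) Ax := by
  have hF' := consistent_apUpd_upd hAx hA hF hM ρ hw
  intro B hB ρ₀
  rw [eval_lhs]
  refine Frame.app_approx fun v ⟨w, hwB, he⟩ => ?_
  rcases Finset.mem_insert.mp he with he | he
  · obtain ⟨kA, aA, argsA, rhsA⟩ := A
    obtain ⟨kB, aB, argsB, rhsB⟩ := B
    cases he
    -- no two left-hand sides unify, so the new generator fires only for `A` itself
    have hAB := hAx.unique _ hA _ hB rfl rfl fun i => GVar.unif_of_approx (hwB i)
    cases hAB
    refine eval_mono hF' (Finset.subset_insert _ _) rhsA fun x hx => ?_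
    obtain ⟨i, -, hxi⟩ := Finset.mem_biUnion.mp (hAx.rhsVars _ hA hx)
    exact GVar.unapply_evalA ρ₀ hxi ▸ GVar.approx_unapply (hwB i) hxi
  · have hB := hM B hB ρ₀
    rw [eval_lhs] at hB
    exact (Frame.approx_app hF ⟨w, hwB, he⟩).trans <|
      hB.trans (eval_mono hF' (Finset.subset_insert _ _) B.rhs fun x _ => .refl _)

end NiceAxioms

theorem Deriv.axiomsUsed_subset {Ax : Set Axm} {t u : Tm} :
    ∀ d : Deriv Ax t u, d.axiomsUsed ⊆ Ax
  | .ax _ hA _ => Set.singleton_subset_iff.mpr hA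
  | .refl _ => Set.empty_subset _
  | .symm d => d.axiomsUsed_subset
  | .trans d₁ d₂ => Set.union_subset d₁.axiomsUsed_subset d₂.axiomsUsed_subset
  | .compat _ _ d => d.axiomsUsed_subset
  | .subst _ _ d => d.axiomsUsed_subset

theorem Frame.apSeq_append (F : Frame) (σ₁ σ₂ : List Upd) :
    F.apSeq (σ₁ ++ σ₂) = (F.apSeq σ₁).apSeq σ₂ :=
  List.foldl_append

theorem Frame.subset_apSeq (F : Frame) : ∀ σ : List Upd, F ⊆ F.apSeq σ
  | [] => subset_rfl
  | u :: σ => (Finset.subset_insert u.entry F).trans ((F.apUpd u).subset_apSeq σ)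

section UpdSeq

variable {Ax : Set Axm} {a b : Tm} {e : Deriv Ax a b}

theorem IsUpdSeq.mono {c d : Tm} {e' : Deriv Ax c d} {κ κ' : ℕ} (hκ : κ ≤ κ')
    (hax : e.axiomsUsed ⊆ e'.axiomsUsed) : ∀ {F : Frame} {σ : List Upd},
    IsUpdSeq κ e F σ → IsUpdSeq κ' e' F σ
  | _, [], _ => trivial
  | _, _ :: _, ⟨⟨hw, hg, A, hA, ρ, hu⟩, hσ⟩ =>
    ⟨⟨hw, hg.trans hκ, A, hax hA, ρ, hu⟩, IsUpdSeq.mono hκ hax hσ⟩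

theorem IsUpdSeq.append {κ : ℕ} : ∀ {F : Frame} {σ₁ σ₂ : List Upd},
    IsUpdSeq κ e F σ₁ → IsUpdSeq κ e (F.apSeq σ₁) σ₂ → IsUpdSeq κ e F (σ₁ ++ σ₂)
  | _, [], _, _, h₂ => h₂
  | _, _ :: _, _, ⟨hu, h₁⟩, h₂ => ⟨hu, IsUpdSeq.append h₁ h₂⟩

theorem IsUpdSeq.gauge_apSeq_le {κ : ℕ} : ∀ {F : Frame} {σ : List Upd},
    IsUpdSeq κ e F σ → (F.apSeq σ).gauge ≤ max F.gauge κ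
  | _, [], _ => le_max_left _ _
  | F, u :: _, ⟨⟨_, hu, _⟩, hσ⟩ => by
    have hF : (F.apUpd u).gauge ≤ max F.gauge κ := by
      rw [Frame.apUpd, Frame.gauge, Finset.sup_insert]
      exact max_le (hu.trans (le_max_right _ _)) (le_max_left _ _)
    exact hσ.gauge_apSeq_le.trans (max_le hF (le_max_right _ _))

theorem IsUpdSeq.consistent_isModel (hAx : NiceAxioms Ax) {κ : ℕ} :
    ∀ {F : Frame} {σ : List Upd}, IsUpdSeq κ e F σ → F.Consistent → IsModel F Ax →
    (F.apSeq σ).Consistent ∧ IsModel (F.apSeq σ) Ax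
  | _, [], _, hF, hM => ⟨hF, hM⟩
  | F, u :: _, ⟨⟨hw, _, A, hA, ρ, hu⟩, hσ⟩, hF, hM => by
    obtain rfl : u = A.upd F ρ := hu
    replace hA := e.axiomsUsed_subset hA
    exact hσ.consistent_isModel hAx (consistent_apUpd_upd hAx hA hF hM ρ hw)
      (isModel_apUpd_upd hAx hA hF hM ρ hw)

end UpdSeq

namespace Deriv

variable {Ax : Set Axm} {t u : Tm}

/-- The invariant of the induction. It quantifies over all consistent models, so that after
the updates for one premise of a transitivity step the other premise applies to the new frame;
the budget `n` is relative to that frame. -/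
def Simulates (e : Deriv Ax t u) (n : ℕ) (a b : Tm) : Prop :=
  ∀ (F : Frame) (ρ : Assignment), F.Consistent → IsModel F Ax →
    ∃ σ, IsUpdSeq (max F.gauge ρ.gauge + n) e F σ ∧ Approx (eval F ρ a) (eval (F.apSeq σ) ρ b)

variable {e : Deriv Ax t u} {n : ℕ} {a b : Tm}

theorem Simulates.mono {c d : Tm} {e' : Deriv Ax c d} {n' : ℕ} (h : e.Simulates n a b)
    (hn : n ≤ n') (hax : e.axiomsUsed ⊆ e'.axiomsUsed) : e'.Simulates n' a b := fun F ρ hF hM =>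
  let ⟨σ, hσ, hab⟩ := h F ρ hF hM
  ⟨σ, hσ.mono (by omega) hax, hab⟩

theorem simulates_refl (e : Deriv Ax t u) (n : ℕ) (a : Tm) : e.Simulates n a a :=
  fun _ _ _ _ => ⟨[], trivial, .refl _⟩

section

variable (hAx : NiceAxioms Ax)
include hAx

theorem Simulates.trans {n₂ : ℕ} {c : Tm} (h₁ : e.Simulates n a b) (h₂ : e.Simulates n₂ b c) :
    e.Simulates (n + n₂) a c := by
  intro F ρ hF hM
  obtain ⟨σ₁, hσ₁, hab⟩ := h₁ F ρ hF hM
  obtain ⟨hF₁, hM₁⟩ := hσ₁.consistent_isModel hAx hF hM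
  obtain ⟨σ₂, hσ₂, hbc⟩ := h₂ _ ρ hF₁ hM₁
  have hg := hσ₁.gauge_apSeq_le
  refine ⟨σ₁ ++ σ₂, hσ₁.mono (by omega) subset_rfl |>.append (hσ₂.mono (by omega) subset_rfl), ?_⟩
  rw [Frame.apSeq_append]
  exact hab.trans hbc

theorem Simulates.compat (h : e.Simulates n a b) (s : Tm) (x : ℕ) :
    e.Simulates n (s.subst x a) (s.subst x b) := by
  intro F ρ hF hM
  obtain ⟨σ, hσ, hab⟩ := h F ρ hF hM
  refine ⟨σ, hσ, ?_⟩
  rw [eval_subst, eval_subst]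
  exact eval_mono (hσ.consistent_isModel hAx hF hM).1 (F.subset_apSeq σ) s
    fun y _ => ρ.approx_update x hab y

theorem Simulates.subst (h : e.Simulates n a b) (s : Tm) (x : ℕ) :
    e.Simulates (n + s.lh) (a.subst x s) (b.subst x s) := by
  intro F ρ hF hM
  obtain ⟨σ, hσ, hab⟩ := h F (ρ.update x (eval F ρ s)) hF hM
  have hF' := (hσ.consistent_isModel hAx hF hM).1
  have hg := ρ.gauge_update_le x (eval F ρ s)
  have hs := eval_gauge_le F ρ s
  have := s.one_le_lh
  refine ⟨σ, hσ.mono (by omega) subset_rfl, ?_⟩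
  rw [eval_subst, eval_subst]
  exact hab.trans <| eval_mono hF' subset_rfl b fun y _ =>
    ρ.approx_update x (eval_mono hF' (F.subset_apSeq σ) s fun _ _ => .refl _) y

end

variable {A : Axm}

theorem simulates_axiom (hA : A ∈ Ax) (σ : ℕ → Tm) (n : ℕ) :
    e.Simulates n (A.lhs.msubst σ) (A.rhs.msubst σ) := by
  intro F ρ _ hM
  obtain ⟨ρ', hρ'⟩ := exists_assignment_eval_eq F ρ σ (A.lhs.vars ∪ A.rhs.vars)
  refine ⟨[], trivial, ?_⟩
  rw [Frame.apSeq, List.foldl_nil,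
    eval_msubst A.lhs fun x hx => hρ' x (Finset.mem_union_left _ hx),
    eval_msubst A.rhs fun x hx => hρ' x (Finset.mem_union_right _ hx)]
  exact hM A hA ρ'

theorem simulates_axiom_symm (hAx : NiceAxioms Ax) (hA : A ∈ Ax) (hAe : A ∈ e.axiomsUsed)
    (σ : ℕ → Tm) : e.Simulates ((A.lhs.msubst σ).lh + (A.rhs.msubst σ).lh)
      (A.rhs.msubst σ) (A.lhs.msubst σ) := by
  intro F ρ hF hM
  obtain ⟨ρ', hρ'⟩ := exists_assignment_eval_eq F ρ σ (A.lhs.vars ∪ A.rhs.vars)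
  have hlhs : ∀ x ∈ A.lhs.vars, eval F ρ (σ x) = ρ' x := fun x hx =>
    hρ' x (Finset.mem_union_left _ hx)
  rw [eval_msubst A.rhs fun x hx => hρ' x (Finset.mem_union_right _ hx)]
  by_cases hw : eval F ρ' A.rhs = D.star
  · exact ⟨[], trivial, hw ▸ .star _⟩
  have hF' := consistent_apUpd_upd hAx hA hF hM ρ' hw
  refine ⟨[A.upd F ρ'], ⟨⟨hw, Axm.gauge_upd_le hρ', A, hAe, ρ', rfl⟩, trivial⟩, ?_⟩
  obtain ⟨ρ'', hρ''⟩ := exists_assignment_eval_eq (F.apUpd (A.upd F ρ')) ρ σ A.lhs.vars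
  have hnew : Approx (eval F ρ' A.rhs) (eval (F.apUpd (A.upd F ρ')) ρ' A.lhs) := by
    rw [eval_lhs]
    exact Frame.approx_app hF' ⟨_, fun i => .refl _, Finset.mem_insert_self _ _⟩
  rw [show F.apSeq [A.upd F ρ'] = F.apUpd (A.upd F ρ') from rfl, eval_msubst A.lhs hρ'']
  exact hnew.trans <| eval_mono hF' subset_rfl A.lhs fun x hx =>
    hlhs x hx ▸ hρ'' x hx ▸ eval_mono hF' (Finset.subset_insert _ _) (σ x) fun _ _ => .refl _

theorem simulates (hAx : NiceAxioms Ax) (d : Deriv Ax t u) :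
    d.Simulates d.lh t u ∧ d.Simulates d.lh u t := by
  induction d with
  | ax A hA σ =>
    have hlh : (A.lhs.msubst σ).lh + (A.rhs.msubst σ).lh ≤ (Deriv.ax A hA σ).lh := by
      simp only [Deriv.lh]; omega
    exact ⟨simulates_axiom hA σ _,
      (simulates_axiom_symm (e := .ax A hA σ) hAx hA rfl σ).mono hlh subset_rfl⟩
  | refl t => exact ⟨simulates_refl _ _ t, simulates_refl _ _ t⟩
  | symm d ih =>
    have hlh : d.lh ≤ d.symm.lh := by simp only [Deriv.lh]; omega
    exact ⟨ih.2.mono hlh subset_rfl, ih.1.mono hlh subset_rfl⟩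
  | trans d₁ d₂ ih₁ ih₂ =>
    have hlh : d₁.lh + d₂.lh ≤ (d₁.trans d₂).lh := by simp only [Deriv.lh]; omega
    exact ⟨((ih₁.1.mono le_rfl Set.subset_union_left).trans hAx
        (ih₂.1.mono le_rfl Set.subset_union_right)).mono hlh subset_rfl,
      ((ih₂.2.mono le_rfl Set.subset_union_right).trans hAx
        (ih₁.2.mono le_rfl Set.subset_union_left)).mono (by omega) subset_rfl⟩
  | compat s x d ih =>
    have hlh : d.lh ≤ (d.compat s x).lh := by simp only [Deriv.lh]; omega
    exact ⟨(ih.1.compat hAx s x).mono hlh subset_rfl, (ih.2.compat hAx s x).mono hlh subset_rfl⟩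
  | subst s x d ih =>
    have hlh : d.lh + s.lh ≤ (d.subst s x).lh := by simp only [Deriv.lh]; omega
    exact ⟨(ih.1.subst hAx s x).mono hlh subset_rfl, (ih.2.subst hAx s x).mono hlh subset_rfl⟩

end Deriv

theorem soundness_approximation_general (Ax : Set Axm) (hAx : NiceAxioms Ax)
    {t u : Tm} (d : Deriv Ax t u)
    (ρ : Assignment) (F : Frame) (hFc : F.Consistent) (hM : IsModel F Ax)
    (κ : ℕ) (hκ : κ = max F.gauge ρ.gauge + d.lh) :
    ∃ σ₁ σ₂ : List Upd, IsUpdSeq κ d F σ₁ ∧ IsUpdSeq κ d F σ₂ ∧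
      Approx (eval F ρ t) (eval (F.apSeq σ₁) ρ u) ∧
      Approx (eval F ρ u) (eval (F.apSeq σ₂) ρ t) := by
  subst hκ
  obtain ⟨hforth, hback⟩ := d.simulates hAx
  obtain ⟨σ₁, hσ₁, htu⟩ := hforth F ρ hFc hM
  obtain ⟨σ₂, hσ₂, hut⟩ := hback F ρ hFc hM
  exact ⟨σ₁, σ₂, hσ₁, hσ₂, htu, hut⟩

/-- Soundness of `PETS(Ax)` via approximation semantics,
provable in `S¹₂`... `S²₂`: if `𝒟 ⊢ t = u` is in Variable Normal Form, `ρ`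
is an assignment, `F` a model of `Ax`, and `κ = max(G(F), G(ρ)) + lh(𝒟)`,
then there are sequences `σ₁`, `σ₂` of updates based on `F`, `κ` and `𝒟`
with `⟦t⟧_{F,ρ} ⊑ ⟦u⟧_{F*σ₁,ρ}` and `⟦u⟧_{F,ρ} ⊑ ⟦t⟧_{F*σ₂,ρ}`. -/
theorem soundness_approximation (Ax : Set Axm) (hAx : NiceAxioms Ax)
    {t u : Tm} (d : Deriv Ax t u) (hVNF : d.VNF)
    (ρ : Assignment) (F : Frame) (hFc : F.Consistent) (hM : IsModel F Ax)
    (κ : ℕ) (hκ : κ = max F.gauge ρ.gauge + d.lh) :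
    ∃ σ₁ σ₂ : List Upd, IsUpdSeq κ d F σ₁ ∧ IsUpdSeq κ d F σ₂ ∧
      Approx (eval F ρ t) (eval (F.apSeq σ₁) ρ u) ∧
      Approx (eval F ρ u) (eval (F.apSeq σ₂) ρ t) :=
  soundness_approximation_general Ax hAx d ρ F hFc hM κ hκ

end PETS
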